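/- arXiv:1810.01556 — 4 statements merged into one kernel-verified Lean document; each statement's English description precedes it below -/
import Mathlib

section
/- Let X and Y be real Banach spaces, and let c, δ, C̃, Ĉ > 0 and ε ∈ (0, δ) be constants. Suppose that for each real t ≥ 1 we are given: (i) a continuous linear map A_t : Y → X with operator norm ‖A_t‖ ≤ C̃·t²; (ii) an element b_t ∈ Y with ‖b_t‖ ≤ c·e^{−δt}; (iii) a map Q_t : X → Y with Q_t(0) = 0 such that for every ξ ∈ (0,1] and all x₁, x₂ ∈ X with ‖x₁‖ ≤ ξ and ‖x₂‖ ≤ ξ one has ‖Q_t(x₁) − Q_t(x₂)‖ ≤ Ĉ·ξ·t²·‖x₁ − x₂‖. Then there exist constants C, C', t₀ > 0 such that for every t ≥ t₀, the map T_t : X → X defined by T_t(x) = −A_t(b_t + Q_t(x)) has a fixed point x_t satisfying ‖x_t‖ ≤ C·e^{(−δ+ε)t}, and x_t is the unique fixed point of T_t in the closed ball of radius C'·t^{−4−ε} centered at 0. -/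
/-!
For fixed `t`, the map `T_t` is a `1/2`-contraction on the ball of radius `r_t = C' t^(-4-ε)`,
since `‖A_t‖` times the Lipschitz constant `Ĉ r_t t²` of `Q_t` there is `≤ C̃ Ĉ C' t^(-ε) ≤ 1/2`.
Hence `‖T_t x‖ ≤ ‖A_t‖ ‖b_t‖ + ‖x‖ / 2`, and `T_t` maps the ball into itself as soon as
`‖A_t‖ ‖b_t‖ ≤ C̃ c t² e^(-δt) ≤ r_t / 2`, which holds for large `t` because the exponential beats
every power. Banach's fixed point theorem gives the unique fixed point in the ball, and the same
estimate bounds it by `2 C̃ c t² e^(-δt) ≤ 2 C̃ c e^((-δ+ε)t)` for large `t`.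
-/

open Filter Function Metric Real Set
open scoped NNReal

theorem LipschitzOnWith.existsUnique_isFixedPt_of_mapsTo {α : Type*} [MetricSpace α]
    {f : α → α} {s : Set α} {K : ℝ≥0} (hK : K < 1) (hf : LipschitzOnWith K f s)
    (hsf : MapsTo f s s) (hsc : IsComplete s) (hs : s.Nonempty) :
    ∃! x, x ∈ s ∧ IsFixedPt f x := by
  obtain ⟨x₀, hx₀⟩ := hs
  have hcontr : ContractingWith K (hsf.restrict f s s) := ⟨hK, hf.mapsToRestrict hsf⟩
  obtain ⟨x, hxs, hfx, -⟩ := hcontr.exists_fixedPoint' hsc hsf hx₀ (edist_ne_top _ _)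
  refine ⟨x, ⟨hxs, hfx⟩, fun y ⟨hys, hfy⟩ => ?_⟩
  have := hcontr.fixedPoint_unique' (x := ⟨y, hys⟩) (y := ⟨x, hxs⟩)
    (Subtype.ext hfy) (Subtype.ext hfx)
  exact congrArg Subtype.val this

section FixedPoint

variable {X Y : Type*} [NormedAddCommGroup X] [NormedSpace ℝ X]
  [NormedAddCommGroup Y] [NormedSpace ℝ Y] (A : Y →L[ℝ] X) (b : Y) (Q : X → Y) {r L : ℝ}

theorem norm_neg_apply_add_sub_le (hQ : ∀ x₁ x₂ : X, ‖x₁‖ ≤ r → ‖x₂‖ ≤ r →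
      ‖Q x₁ - Q x₂‖ ≤ L * ‖x₁ - x₂‖) (hL : ‖A‖ * L ≤ 1 / 2)
    (x₁ x₂ : X) (h₁ : ‖x₁‖ ≤ r) (h₂ : ‖x₂‖ ≤ r) :
    ‖-A (b + Q x₁) - -A (b + Q x₂)‖ ≤ 1 / 2 * ‖x₁ - x₂‖ := by
  have hdiff : -A (b + Q x₁) - -A (b + Q x₂) = A (Q x₂ - Q x₁) := by
    simp only [map_add, map_sub]; abel
  rw [hdiff, norm_sub_rev x₁]
  calc ‖A (Q x₂ - Q x₁)‖ ≤ ‖A‖ * (L * ‖x₂ - x₁‖) :=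
        (A.le_opNorm _).trans (by gcongr; exact hQ x₂ x₁ h₂ h₁)
    _ = ‖A‖ * L * ‖x₂ - x₁‖ := by ring
    _ ≤ 1 / 2 * ‖x₂ - x₁‖ := by gcongr

theorem exists_fixedPoint_neg_apply_add [CompleteSpace X] (hQ0 : Q 0 = 0)
    (hQ : ∀ x₁ x₂ : X, ‖x₁‖ ≤ r → ‖x₂‖ ≤ r → ‖Q x₁ - Q x₂‖ ≤ L * ‖x₁ - x₂‖)
    (hL : ‖A‖ * L ≤ 1 / 2) (hb : 2 * ‖A‖ * ‖b‖ ≤ r) :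
    ∃ x : X, -A (b + Q x) = x ∧ ‖x‖ ≤ 2 * ‖A‖ * ‖b‖ ∧
      ∀ y : X, ‖y‖ ≤ r → -A (b + Q y) = y → y = x := by
  have hr : 0 ≤ r := le_trans (by positivity) hb
  have hlip := norm_neg_apply_add_sub_le A b Q hQ hL
  have hbound : ∀ x : X, ‖x‖ ≤ r → ‖-A (b + Q x)‖ ≤ ‖A‖ * ‖b‖ + 1 / 2 * ‖x‖ := by
    intro x hx
    have h0 := hlip x 0 hx (norm_zero.trans_le hr)
    rw [hQ0, add_zero, sub_zero] at h0
    calc ‖-A (b + Q x)‖ ≤ ‖-A b‖ + ‖-A (b + Q x) - -A b‖ := norm_le_norm_add_norm_sub' _ _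
      _ ≤ ‖A‖ * ‖b‖ + 1 / 2 * ‖x‖ := by
        rw [norm_neg]; exact add_le_add (A.le_opNorm b) h0
  have hmaps : MapsTo (fun x => -A (b + Q x)) (closedBall 0 r) (closedBall 0 r) := by
    intro x hx
    rw [mem_closedBall_zero_iff] at hx ⊢
    linarith [hbound x hx]
  have hcontr : LipschitzOnWith (1 / 2) (fun x => -A (b + Q x)) (closedBall 0 r) := by
    refine LipschitzOnWith.of_dist_le_mul fun x₁ hx₁ x₂ hx₂ => ?_
    rw [mem_closedBall_zero_iff] at hx₁ hx₂
    simpa [dist_eq_norm] using hlip x₁ x₂ hx₁ hx₂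
  obtain ⟨x, ⟨hxr, hfix⟩, huniq⟩ := hcontr.existsUnique_isFixedPt_of_mapsTo
    (by norm_num) hmaps isClosed_closedBall.isComplete (nonempty_closedBall.2 hr)
  rw [mem_closedBall_zero_iff] at hxr
  refine ⟨x, hfix, ?_, fun y hy hfy => huniq y ⟨mem_closedBall_zero_iff.2 hy, hfy⟩⟩
  have hx : ‖x‖ ≤ ‖A‖ * ‖b‖ + 1 / 2 * ‖x‖ := by
    simpa only [hfix.eq] using hbound x hxr
  linarith

end FixedPoint

theorem eventually_sq_mul_exp_le_mul_rpow {δ M : ℝ} (ε : ℝ) (hδ : 0 < δ) (hM : 0 < M) :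
    ∀ᶠ t in atTop, t ^ 2 * exp (-δ * t) ≤ M * t ^ (-4 - ε) := by
  filter_upwards [(tendsto_rpow_mul_exp_neg_mul_atTop_nhds_zero (6 + ε) δ hδ).eventually
    (eventually_le_nhds hM), eventually_gt_atTop 0] with t hle ht
  calc t ^ 2 * exp (-δ * t) = t ^ (6 + ε) * exp (-δ * t) * t ^ (-4 - ε) := by
        rw [mul_right_comm, ← rpow_add ht, ← rpow_two]; ring_nf
    _ ≤ M * t ^ (-4 - ε) := by gcongr

theorem eventually_sq_mul_exp_le_exp {ε : ℝ} (δ : ℝ) (hε : 0 < ε) :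
    ∀ᶠ t in atTop, t ^ 2 * exp (-δ * t) ≤ exp ((-δ + ε) * t) := by
  filter_upwards [(tendsto_rpow_mul_exp_neg_mul_atTop_nhds_zero 2 ε hε).eventually
    (eventually_le_nhds one_pos)] with t hle
  calc t ^ 2 * exp (-δ * t) = t ^ (2 : ℝ) * exp (-ε * t) * exp ((-δ + ε) * t) := by
        rw [rpow_two, mul_assoc, ← exp_add]; ring_nf
    _ ≤ exp ((-δ + ε) * t) := mul_le_of_le_one_left (exp_pos _).le hle

theorem sq_mul_sq_mul_rpow_neg_four_sub_le_one {t ε : ℝ} (ht : 1 ≤ t) (hε : 0 ≤ ε) :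
    t ^ 2 * t ^ 2 * t ^ (-4 - ε) ≤ 1 := by
  have ht₀ : 0 < t := one_pos.trans_le ht
  rw [← rpow_two, ← rpow_add ht₀, ← rpow_add ht₀]
  exact rpow_le_one_of_one_le_of_nonpos ht (by linarith)

theorem stmt_0_general
    {X Y : Type*} [NormedAddCommGroup X] [NormedSpace ℝ X] [CompleteSpace X]
    [NormedAddCommGroup Y] [NormedSpace ℝ Y]
    (c δ Ctil Chat ε : ℝ)
    (hc : 0 < c) (hδ : 0 < δ) (hCtil : 0 < Ctil) (hChat : 0 < Chat)
    (hε : 0 < ε)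
    (A : ℝ → Y →L[ℝ] X) (b : ℝ → Y) (Q : ℝ → X → Y)
    (hA : ∀ t : ℝ, 1 ≤ t → ‖A t‖ ≤ Ctil * t ^ 2)
    (hb : ∀ t : ℝ, 1 ≤ t → ‖b t‖ ≤ c * Real.exp (-δ * t))
    (hQ0 : ∀ t : ℝ, 1 ≤ t → Q t 0 = 0)
    (hQ : ∀ t : ℝ, 1 ≤ t → ∀ ξ : ℝ, 0 < ξ → ξ ≤ 1 →
      ∀ x₁ x₂ : X, ‖x₁‖ ≤ ξ → ‖x₂‖ ≤ ξ →
        ‖Q t x₁ - Q t x₂‖ ≤ Chat * ξ * t ^ 2 * ‖x₁ - x₂‖) :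
    ∃ C C' t₀ : ℝ, 0 < C ∧ 0 < C' ∧ 0 < t₀ ∧
      ∀ t : ℝ, t₀ ≤ t →
        ∃ x : X, (- A t (b t + Q t x)) = x ∧
          ‖x‖ ≤ C * Real.exp ((-δ + ε) * t) ∧
          ∀ y : X, ‖y‖ ≤ C' * t ^ (-4 - ε : ℝ) →
            (- A t (b t + Q t y)) = y → y = x := by
  obtain ⟨C', hC'₀, hC'₁, hC'⟩ : ∃ C' : ℝ, 0 < C' ∧ C' ≤ 1 ∧ Ctil * Chat * C' ≤ 1 / 2 := by
    refine ⟨min (1 / (2 * Ctil * Chat)) 1, by positivity, min_le_right _ _, ?_⟩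
    have := (le_div_iff₀ (by positivity)).1 (min_le_left (1 / (2 * Ctil * Chat)) 1)
    linarith
  obtain ⟨t₀, ht₀⟩ := eventually_atTop.1 <| (eventually_ge_atTop 1).and <|
    (eventually_sq_mul_exp_le_mul_rpow ε hδ (M := C' / (2 * Ctil * c)) (by positivity)).and
      (eventually_sq_mul_exp_le_exp δ hε)
  refine ⟨2 * Ctil * c, C', max t₀ 1, by positivity, hC'₀, by positivity, fun t ht => ?_⟩
  obtain ⟨ht₁, hsmall, hdecay⟩ := ht₀ t (le_of_max_le_left ht)
  set r := C' * t ^ (-4 - ε)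
  have hr₀ : 0 < r := by positivity
  have hr₁ : r ≤ 1 :=
    mul_le_one₀ hC'₁ (by positivity) (rpow_le_one_of_one_le_of_nonpos ht₁ (by linarith))
  have hAb : 2 * ‖A t‖ * ‖b t‖ ≤ 2 * Ctil * c * (t ^ 2 * exp (-δ * t)) := by
    grw [hA t ht₁, hb t ht₁]
    exact le_of_eq (by ring)
  have hL : ‖A t‖ * (Chat * r * t ^ 2) ≤ 1 / 2 := calc
    ‖A t‖ * (Chat * r * t ^ 2) ≤ Ctil * t ^ 2 * (Chat * r * t ^ 2) := by grw [hA t ht₁]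
    _ = Ctil * Chat * C' * (t ^ 2 * t ^ 2 * t ^ (-4 - ε)) := by ring
    _ ≤ 1 / 2 * 1 := by gcongr; exact sq_mul_sq_mul_rpow_neg_four_sub_le_one ht₁ hε.le
    _ = 1 / 2 := mul_one _
  obtain ⟨x, hfix, hx, huniq⟩ := exists_fixedPoint_neg_apply_add (A t) (b t) (Q t) (hQ0 t ht₁)
    (hQ t ht₁ r hr₀ hr₁) hL <| hAb.trans <| by
      grw [hsmall]
      exact le_of_eq (by simp only [r]; field_simp)
  exact ⟨x, hfix, by grw [hx, hAb, hdecay], huniq⟩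

/-- The quantitative contraction-mapping scheme underlying the Main Theorem:
given `A_t` with `‖A_t‖ ≤ C̃ t²`, `b_t` with `‖b_t‖ ≤ c e^{-δ t}`, and a nonlinearity
`Q_t` with the local Lipschitz bound, the map `T_t x = -A_t (b_t + Q_t x)` has a fixed
point of size `≤ C e^{(-δ+ε)t}`, unique in a ball of radius `C' t^{-4-ε}`. -/
theorem stmt_0
    {X Y : Type*} [NormedAddCommGroup X] [NormedSpace ℝ X] [CompleteSpace X]
    [NormedAddCommGroup Y] [NormedSpace ℝ Y] [CompleteSpace Y]
    (c δ Ctil Chat ε : ℝ)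
    (hc : 0 < c) (hδ : 0 < δ) (hCtil : 0 < Ctil) (hChat : 0 < Chat)
    (hε : 0 < ε) (hεδ : ε < δ)
    (A : ℝ → Y →L[ℝ] X) (b : ℝ → Y) (Q : ℝ → X → Y)
    (hA : ∀ t : ℝ, 1 ≤ t → ‖A t‖ ≤ Ctil * t ^ 2)
    (hb : ∀ t : ℝ, 1 ≤ t → ‖b t‖ ≤ c * Real.exp (-δ * t))
    (hQ0 : ∀ t : ℝ, 1 ≤ t → Q t 0 = 0)
    (hQ : ∀ t : ℝ, 1 ≤ t → ∀ ξ : ℝ, 0 < ξ → ξ ≤ 1 →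
      ∀ x₁ x₂ : X, ‖x₁‖ ≤ ξ → ‖x₂‖ ≤ ξ →
        ‖Q t x₁ - Q t x₂‖ ≤ Chat * ξ * t ^ 2 * ‖x₁ - x₂‖) :
    ∃ C C' t₀ : ℝ, 0 < C ∧ 0 < C' ∧ 0 < t₀ ∧
      ∀ t : ℝ, t₀ ≤ t →
        ∃ x : X, (- A t (b t + Q t x)) = x ∧
          ‖x‖ ≤ C * Real.exp ((-δ + ε) * t) ∧
          ∀ y : X, ‖y‖ ≤ C' * t ^ (-4 - ε : ℝ) →
            (- A t (b t + Q t y)) = y → y = x :=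
  stmt_0_general c δ Ctil Chat ε hc hδ hCtil hChat hε A b Q hA hb hQ0 hQ
end

section
/- Let K ≥ 2 be an integer and let u_i : (0,∞) → ℝ, indexed cyclically by i ∈ ℤ/Kℤ, be C² solutions of the radial rank-K Toda system (1/4)(u_i''(r) + u_i'(r)/r) = r^{2/K}·(exp(u_i(r) − u_{i+1}(r)) − exp(u_{i−1}(r) − u_i(r))) for all r > 0, and suppose there exist constants C, c > 0 such that |u_i(r)| + |u_i'(r)| + |u_i''(r)| ≤ C·exp(−c·r^{(K+1)/K}) for all r ≥ 1/4 and all i. Let χ : ℝ → [0,1] be a C² cutoff function with χ(r) = 1 for r ≤ 1/2 and χ(r) = 0 for r ≥ 1. For t > 0 set u_{i,t}(r) := u_i(t^{K/(K+1)}·r) and w_{i,t}(r) := χ(r)·u_{i,t}(r). Then there exist constants c', δ, t₀ > 0 such that for all t ≥ t₀, all i ∈ ℤ/Kℤ, and all r ∈ (0,1]: | −(1/4)(w_{i,t}''(r) + w_{i,t}'(r)/r) + t²·r^{2/K}·(exp(w_{i,t}(r) − w_{i+1,t}(r)) − exp(w_{i−1,t}(r) − w_{i,t}(r))) | ≤ c'·e^{−δt}.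 -/
/-!
Put `L = t^{K/(K+1)}`, so that `L² · L^{2/K} = t²`. Then `s ↦ u_i(L s)` solves the Toda system
with coupling `t²`, and where `χ ≡ 1`, i.e. for `r < 1/2`, the residual of `w_{i,t}` vanishes.
For `1/2 ≤ r ≤ 1` the rescaled point satisfies `(L r)^{(K+1)/K} = t r^{(K+1)/K} ≥ t/4`, so the
decay hypothesis makes `u_i, u_i', u_i''` at `L r` of size `C e^{-ct/4}`; the chain rule costs at
most a factor `t²`, which is absorbed by halving the exponential rate.
-/

/-- The rescaled-and-cut-off model solution `w_{i,t}(r) = χ(r) · u_i(t^{K/(K+1)} r)`. -/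
noncomputable def cutoffRescale {K : ℕ} (χ : ℝ → ℝ) (u : ZMod K → ℝ → ℝ)
    (t : ℝ) (i : ZMod K) : ℝ → ℝ :=
  fun s => χ s * u i (t ^ ((K : ℝ) / (K + 1)) * s)

open Real Filter Topology Set

noncomputable def radialLaplacian (f : ℝ → ℝ) (r : ℝ) : ℝ := deriv (deriv f) r + deriv f r / r

noncomputable def todaResidual (K : ℕ) (w : ZMod K → ℝ → ℝ) (τ : ℝ) (i : ZMod K) (r : ℝ) : ℝ :=
  -(1 / 4) * radialLaplacian (w i) r +
    τ * r ^ ((2 : ℝ) / K) * (exp (w i r - w (i + 1) r) - exp (w (i - 1) r - w i r))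

theorem radialLaplacian_congr {f g : ℝ → ℝ} {r : ℝ} (h : f =ᶠ[𝓝 r] g) :
    radialLaplacian f r = radialLaplacian g r := by
  rw [radialLaplacian, radialLaplacian, h.deriv.deriv_eq, h.deriv_eq]

theorem radialLaplacian_comp_mul_left (f : ℝ → ℝ) (L r : ℝ) :
    radialLaplacian (fun s => f (L * s)) r = L ^ 2 * radialLaplacian f (L * r) := by
  have h1 : deriv (fun s => f (L * s)) = fun s => L * deriv f (L * s) :=
    funext fun s => deriv_comp_mul_left L f s
  have h2 : deriv (fun s => L * deriv f (L * s)) r = L * (L * deriv (deriv f) (L * r)) := by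
    rw [deriv_const_mul_field, deriv_comp_mul_left, smul_eq_mul]
  rcases eq_or_ne L 0 with rfl | hL
  · simp [radialLaplacian]
  rw [radialLaplacian, radialLaplacian, h1, h2, mul_add, mul_div_assoc, ← mul_div_mul_left _ r hL]
  ring

theorem ContDiffOn.hasDerivAt_of_isOpen {f : ℝ → ℝ} {U : Set ℝ} {n : WithTop ℕ∞}
    (hf : ContDiffOn ℝ n f U) (hn : n ≠ 0) (hU : IsOpen U) {x : ℝ} (hx : x ∈ U) :
    HasDerivAt f (deriv f x) x :=
  ((hf.differentiableOn hn).differentiableAt (hU.mem_nhds hx)).hasDerivAt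

theorem deriv_deriv_mul_of_contDiffOn {f g : ℝ → ℝ} {U : Set ℝ} (hU : IsOpen U)
    (hf : ContDiffOn ℝ 2 f U) (hg : ContDiffOn ℝ 2 g U) {x : ℝ} (hx : x ∈ U) :
    deriv (deriv fun s => f s * g s) x =
      deriv (deriv f) x * g x + 2 * (deriv f x * deriv g x) + f x * deriv (deriv g) x := by
  have hf' := (hf.deriv_of_isOpen hU (m := 1) le_rfl).hasDerivAt_of_isOpen one_ne_zero hU hx
  have hg' := (hg.deriv_of_isOpen hU (m := 1) le_rfl).hasDerivAt_of_isOpen one_ne_zero hU hx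
  have hderiv : deriv (fun s => f s * g s) =ᶠ[𝓝 x] fun s => deriv f s * g s + f s * deriv g s :=
    eventually_of_mem (hU.mem_nhds hx) fun y hy =>
      ((hf.hasDerivAt_of_isOpen two_ne_zero hU hy).mul
        (hg.hasDerivAt_of_isOpen two_ne_zero hU hy)).deriv
  rw [hderiv.deriv_eq]
  exact ((hf'.mul (hg.hasDerivAt_of_isOpen two_ne_zero hU hx)).add
    ((hf.hasDerivAt_of_isOpen two_ne_zero hU hx).mul hg')).deriv.trans (by ring)

theorem abs_radialLaplacian_mul_le {f g : ℝ → ℝ} {U : Set ℝ} (hU : IsOpen U)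
    (hf : ContDiffOn ℝ 2 f U) (hg : ContDiffOn ℝ 2 g U) {r M E : ℝ} (hrU : r ∈ U)
    (hr : 1 / 2 ≤ r) (hf0 : |f r| ≤ M) (hf1 : |deriv f r| ≤ M) (hf2 : |deriv (deriv f) r| ≤ M)
    (hg0 : |g r| ≤ E) (hg1 : |deriv g r| ≤ E) (hg2 : |deriv (deriv g) r| ≤ E) :
    |radialLaplacian (fun s => f s * g s) r| ≤ 8 * (M * E) := by
  have hM : 0 ≤ M := (abs_nonneg _).trans hf0
  have hprod {a b : ℝ} (ha : |a| ≤ M) (hb : |b| ≤ E) : |a * b| ≤ M * E :=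
    (abs_mul a b).trans_le (mul_le_mul ha hb (abs_nonneg _) hM)
  have hderiv : deriv (fun s => f s * g s) r = deriv f r * g r + f r * deriv g r :=
    ((hf.hasDerivAt_of_isOpen two_ne_zero hU hrU).mul
      (hg.hasDerivAt_of_isOpen two_ne_zero hU hrU)).deriv
  have hdiv : |(deriv f r * g r + f r * deriv g r) / r| ≤ 2 * (2 * (M * E)) := by
    rw [abs_div, abs_of_pos (by linarith : 0 < r), div_le_iff₀ (by linarith)]
    have hME : 0 ≤ M * E := (abs_nonneg _).trans (hprod hf0 hg0)
    linarith [abs_add_le (deriv f r * g r) (f r * deriv g r), hprod hf1 hg0, hprod hf0 hg1,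
      mul_le_mul_of_nonneg_left hr (by positivity : 0 ≤ 4 * (M * E))]
  rw [radialLaplacian, deriv_deriv_mul_of_contDiffOn hU hf hg hrU, hderiv]
  have h2 : |2 * (deriv f r * deriv g r)| ≤ 2 * (M * E) := by
    rw [abs_mul, abs_two]; linarith [hprod hf1 hg1]
  linarith [abs_add_le (deriv (deriv f) r * g r + 2 * (deriv f r * deriv g r) +
      f r * deriv (deriv g) r) ((deriv f r * g r + f r * deriv g r) / r),
    abs_add_le (deriv (deriv f) r * g r + 2 * (deriv f r * deriv g r)) (f r * deriv (deriv g) r),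
    abs_add_le (deriv (deriv f) r * g r) (2 * (deriv f r * deriv g r)),
    hprod hf2 hg0, hprod hf0 hg2]

theorem Real.abs_exp_sub_one_le_abs_mul_exp_abs (x : ℝ) : |exp x - 1| ≤ |x| * exp |x| := by
  have hlow : x + 1 ≤ exp x := add_one_le_exp x
  have hup : exp x - 1 ≤ x * exp x := by
    have := mul_le_mul_of_nonneg_left (add_one_le_exp (-x)) (exp_pos x).le
    rw [← exp_add, add_neg_cancel, exp_zero] at this
    linarith
  have hmul : x * exp x ≤ |x| * exp |x| :=
    (mul_le_mul_of_nonneg_right (le_abs_self x) (exp_pos x).le).trans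
      (mul_le_mul_of_nonneg_left (exp_le_exp.2 (le_abs_self x)) (abs_nonneg x))
  have habs : |x| ≤ |x| * exp |x| :=
    le_mul_of_one_le_right (abs_nonneg x) (one_le_exp (abs_nonneg x))
  rw [abs_le]
  constructor <;> linarith [neg_abs_le x]

theorem Real.abs_exp_sub_exp_le {a b R : ℝ} (ha : |a| ≤ R) (hb : |b| ≤ R) :
    |exp a - exp b| ≤ 2 * R * exp R := by
  have hbound {x : ℝ} (hx : |x| ≤ R) : |exp x - 1| ≤ R * exp R :=
    (abs_exp_sub_one_le_abs_mul_exp_abs x).trans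
      (mul_le_mul hx (exp_le_exp.2 hx) (exp_pos _).le ((abs_nonneg x).trans hx))
  calc |exp a - exp b| = |(exp a - 1) - (exp b - 1)| := by rw [sub_sub_sub_cancel_right]
    _ ≤ |exp a - 1| + |exp b - 1| := abs_sub _ _
    _ ≤ 2 * R * exp R := by linarith [hbound ha, hbound hb]

theorem sq_mul_exp_neg_le {a t : ℝ} (ha : 0 < a) (ht : 0 ≤ t) :
    t ^ 2 * exp (-(a * t)) ≤ (4 / a) ^ 2 * exp (-(a / 2 * t)) := by
  have hlin : t ≤ 4 / a * exp (a / 4 * t) := by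
    have := add_one_le_exp (a / 4 * t)
    rw [div_mul_eq_mul_div, le_div_iff₀ ha]
    linarith
  calc t ^ 2 * exp (-(a * t)) ≤ (4 / a * exp (a / 4 * t)) ^ 2 * exp (-(a * t)) := by gcongr
    _ = (4 / a) ^ 2 * exp (-(a / 2 * t)) := by
      rw [mul_pow, mul_assoc, ← exp_nat_mul, ← exp_add]; ring_nf

theorem rpow_div_add_one_mul_rpow_add_one_div {p t r : ℝ} (hp : 0 < p) (ht : 0 ≤ t)
    (hr : 0 ≤ r) : (t ^ (p / (p + 1)) * r) ^ ((p + 1) / p) = t * r ^ ((p + 1) / p) := by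
  rw [mul_rpow (rpow_nonneg ht _) hr, ← rpow_mul ht,
    show p / (p + 1) * ((p + 1) / p) = 1 by field_simp, rpow_one]

theorem sq_rpow_div_add_one_mul_rpow_two_div {p t r : ℝ} (hp : 0 < p) (ht : 0 < t)
    (hr : 0 ≤ r) :
    (t ^ (p / (p + 1))) ^ 2 * (t ^ (p / (p + 1)) * r) ^ (2 / p) = t ^ 2 * r ^ (2 / p) := by
  rw [mul_rpow (rpow_nonneg ht.le _) hr, ← mul_assoc, ← rpow_natCast, ← rpow_mul ht.le,
    ← rpow_mul ht.le, ← rpow_add ht, ← rpow_natCast t 2]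
  congr 2
  field_simp
  ring

theorem div_four_le_rpow_div_add_one_mul_rpow_add_one_div {p t r : ℝ} (hp : 1 ≤ p)
    (ht : 0 ≤ t) (hr : 1 / 2 ≤ r) (hr1 : r ≤ 1) :
    t / 4 ≤ (t ^ (p / (p + 1)) * r) ^ ((p + 1) / p) := by
  have hr2 : r ^ (2 : ℝ) ≤ r ^ ((p + 1) / p) :=
    rpow_le_rpow_of_exponent_ge (by linarith) hr1 (by rw [div_le_iff₀ (by linarith)]; linarith)
  rw [rpow_div_add_one_mul_rpow_add_one_div (by linarith) ht (by linarith)]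
  have hr4 : 1 / 4 ≤ r ^ 2 := by nlinarith
  rw [rpow_two] at hr2
  linarith [mul_le_mul_of_nonneg_left (hr4.trans hr2) ht]

theorem abs_todaResidual_le {K : ℕ} {w : ZMod K → ℝ → ℝ} {τ r A B : ℝ} (i : ZMod K)
    (hτ : 0 ≤ τ) (hr0 : 0 ≤ r) (hr1 : r ≤ 1)
    (hΔ : |radialLaplacian (w i) r| ≤ A) (hw : ∀ j, |w j r| ≤ B) :
    |todaResidual K w τ i r| ≤ A / 4 + τ * (4 * B * exp (2 * B)) := by
  have hpow : |r ^ ((2 : ℝ) / K)| ≤ 1 := by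
    rw [abs_of_nonneg (rpow_nonneg hr0 _)]; exact rpow_le_one hr0 hr1 (by positivity)
  have hexp := abs_exp_sub_exp_le (R := 2 * B)
    ((abs_sub (w i r) (w (i + 1) r)).trans (by linarith [hw i, hw (i + 1)]))
    ((abs_sub (w (i - 1) r) (w i r)).trans (by linarith [hw i, hw (i - 1)]))
  rw [todaResidual]
  refine (abs_add_le _ _).trans (add_le_add ?_ ?_)
  · rw [abs_mul, abs_neg, abs_of_pos (by norm_num : (0 : ℝ) < 1 / 4)]; linarith
  · rw [abs_mul, abs_mul, abs_of_nonneg hτ]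
    calc τ * |r ^ ((2 : ℝ) / K)| * |exp (w i r - w (i + 1) r) - exp (w (i - 1) r - w i r)|
        ≤ τ * 1 * (2 * (2 * B) * exp (2 * B)) := by gcongr
      _ = τ * (4 * B * exp (2 * B)) := by ring

theorem todaResidual_cutoffRescale_eq_zero {K : ℕ} (hK : 0 < K) {u : ZMod K → ℝ → ℝ}
    (hu : ∀ i r, 0 < r → todaResidual K u 1 i r = 0) {χ : ℝ → ℝ}
    (hχ : ∀ r : ℝ, r ≤ 1 / 2 → χ r = 1) {t r : ℝ} (ht : 0 < t) (hr0 : 0 < r) (hr : r < 1 / 2)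
    (i : ZMod K) : todaResidual K (cutoffRescale χ u t) (t ^ 2) i r = 0 := by
  set L := t ^ ((K : ℝ) / (K + 1))
  have hw (j : ZMod K) : cutoffRescale χ u t j =ᶠ[𝓝 r] fun s => u j (L * s) := by
    filter_upwards [Iio_mem_nhds hr] with s hs
    rw [cutoffRescale, hχ s hs.le, one_mul]
  have hscale : t ^ 2 * r ^ ((2 : ℝ) / K) = L ^ 2 * (L * r) ^ ((2 : ℝ) / K) :=
    (sq_rpow_div_add_one_mul_rpow_two_div (by exact_mod_cast hK) ht hr0.le).symm
  calc todaResidual K (cutoffRescale χ u t) (t ^ 2) i r = L ^ 2 * todaResidual K u 1 i (L * r) := by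
        simp only [todaResidual, (hw _).eq_of_nhds, radialLaplacian_congr (hw i),
          radialLaplacian_comp_mul_left, hscale]
        ring
    _ = 0 := by rw [hu i _ (by positivity), mul_zero]

theorem abs_todaResidual_cutoffRescale_le {K : ℕ} {u : ZMod K → ℝ → ℝ}
    (hreg : ∀ i, ContDiffOn ℝ 2 (u i) (Ioi 0)) {χ : ℝ → ℝ} (hχ : ContDiff ℝ 2 χ)
    {t r M D : ℝ} (ht : 1 ≤ t) (hr0 : 1 / 2 ≤ r) (hr1 : r ≤ 1)
    (hχ0 : |χ r| ≤ M) (hχ1 : |deriv χ r| ≤ M) (hχ2 : |deriv (deriv χ) r| ≤ M)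
    (hu : ∀ j, |u j (t ^ ((K : ℝ) / (K + 1)) * r)| + |deriv (u j) (t ^ ((K : ℝ) / (K + 1)) * r)| +
      |deriv (deriv (u j)) (t ^ ((K : ℝ) / (K + 1)) * r)| ≤ D) (i : ZMod K) :
    |todaResidual K (cutoffRescale χ u t) (t ^ 2) i r| ≤
      t ^ 2 * (M * D) * (2 + 4 * exp (2 * (M * D))) := by
  set L := t ^ ((K : ℝ) / (K + 1))
  have hL1 : 1 ≤ L := one_le_rpow ht (by positivity)
  have hL0 : 0 ≤ L := zero_le_one.trans hL1
  have hLt : L ≤ t := by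
    calc L ≤ t ^ (1 : ℝ) :=
          rpow_le_rpow_of_exponent_le ht (div_le_one_of_le₀ (by linarith) (by positivity))
      _ = t := rpow_one t
  have hM : 0 ≤ M := (abs_nonneg _).trans hχ0
  have hD : 0 ≤ D :=
    (add_nonneg (add_nonneg (abs_nonneg _) (abs_nonneg _)) (abs_nonneg _)).trans (hu i)
  have hg : ContDiffOn ℝ 2 (fun s => u i (L * s)) (Ioi 0) :=
    (hreg i).comp (contDiffOn_const.mul contDiffOn_id : ContDiffOn ℝ 2 (fun s : ℝ => L * s) _)
      fun s hs => mul_pos (by linarith : (0 : ℝ) < L) hs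
  have hg1 : deriv (fun s => u i (L * s)) = fun s => L * deriv (u i) (L * s) :=
    funext fun s => deriv_comp_mul_left L (u i) s
  have hg2 : deriv (deriv fun s => u i (L * s)) r = L * (L * deriv (deriv (u i)) (L * r)) := by
    rw [hg1, deriv_const_mul_field, deriv_comp_mul_left, smul_eq_mul]
  obtain ⟨hb0, hb1, hb2⟩ : |u i (L * r)| ≤ D ∧ |deriv (u i) (L * r)| ≤ D ∧
      |deriv (deriv (u i)) (L * r)| ≤ D := by
    have := hu i
    refine ⟨?_, ?_, ?_⟩ <;> linarith [abs_nonneg (u i (L * r)), abs_nonneg (deriv (u i) (L * r)),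
      abs_nonneg (deriv (deriv (u i)) (L * r))]
  have hΔ : |radialLaplacian (cutoffRescale χ u t i) r| ≤ 8 * (M * (t ^ 2 * D)) := by
    refine (abs_radialLaplacian_mul_le (E := L ^ 2 * D) isOpen_Ioi hχ.contDiffOn hg
      (show (0 : ℝ) < r by linarith) hr0 hχ0 hχ1 hχ2 ?_ ?_ ?_).trans (by gcongr)
    · exact hb0.trans (le_mul_of_one_le_left hD (one_le_pow₀ hL1))
    · rw [hg1, abs_mul, abs_of_nonneg hL0]
      calc L * |deriv (u i) (L * r)| ≤ L * (L * D) := by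
            gcongr; exact hb1.trans (le_mul_of_one_le_left hD hL1)
        _ = L ^ 2 * D := by ring
    · rw [hg2, abs_mul, abs_mul, abs_of_nonneg hL0]
      calc L * (L * |deriv (deriv (u i)) (L * r)|) ≤ L * (L * D) := by gcongr
        _ = L ^ 2 * D := by ring
  have hw (j : ZMod K) : |cutoffRescale χ u t j r| ≤ M * D := by
    rw [cutoffRescale, abs_mul]
    have huj : |u j (L * r)| ≤ D := by
      linarith [hu j, abs_nonneg (deriv (u j) (L * r)), abs_nonneg (deriv (deriv (u j)) (L * r))]
    exact mul_le_mul hχ0 huj (abs_nonneg _) hM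
  calc |todaResidual K (cutoffRescale χ u t) (t ^ 2) i r|
      ≤ 8 * (M * (t ^ 2 * D)) / 4 + t ^ 2 * (4 * (M * D) * exp (2 * (M * D))) :=
        abs_todaResidual_le i (sq_nonneg t) (by linarith) hr1 hΔ hw
    _ = t ^ 2 * (M * D) * (2 + 4 * exp (2 * (M * D))) := by ring

theorem ContDiff.exists_abs_le_of_isCompact {f : ℝ → ℝ} (hf : ContDiff ℝ 2 f) {s : Set ℝ}
    (hs : IsCompact s) :
    ∃ M, 0 < M ∧ ∀ x ∈ s, |f x| ≤ M ∧ |deriv f x| ≤ M ∧ |deriv (deriv f) x| ≤ M := by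
  obtain ⟨a, ha⟩ := hs.exists_bound_of_continuousOn hf.continuous.continuousOn
  obtain ⟨b, hb⟩ := hs.exists_bound_of_continuousOn
    (hf.continuous_deriv (by norm_num)).continuousOn
  obtain ⟨d, hd⟩ := hs.exists_bound_of_continuousOn
    (hf.deriv' (n := 1)).continuous_deriv_one.continuousOn
  refine ⟨|a| + |b| + |d| + 1, by positivity, fun x hx => ?_⟩
  have := ha x hx
  have := hb x hx
  have := hd x hx
  simp only [Real.norm_eq_abs] at *
  refine ⟨?_, ?_, ?_⟩ <;> linarith [le_abs_self a, le_abs_self b, le_abs_self d,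
    abs_nonneg a, abs_nonneg b, abs_nonneg d]

theorem stmt_1_general
    (K : ℕ) (hK : 2 ≤ K)
    (u : ZMod K → ℝ → ℝ)
    (hreg : ∀ i, ContDiffOn ℝ 2 (u i) (Set.Ioi 0))
    (hODE : ∀ i, ∀ r : ℝ, 0 < r →
      (1 / 4) * (deriv (deriv (u i)) r + deriv (u i) r / r) =
        r ^ ((2 : ℝ) / K) *
          (Real.exp (u i r - u (i + 1) r) - Real.exp (u (i - 1) r - u i r)))
    (C c : ℝ) (hC : 0 < C) (hc : 0 < c)
    (hdecay : ∀ i, ∀ r : ℝ, 1 / 4 ≤ r →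
      |u i r| + |deriv (u i) r| + |deriv (deriv (u i)) r| ≤
        C * Real.exp (-c * r ^ (((K : ℝ) + 1) / K)))
    (χ : ℝ → ℝ) (hχ : ContDiff ℝ 2 χ)
    (hχ1 : ∀ r : ℝ, r ≤ 1 / 2 → χ r = 1) :
    ∃ c' δ t₀ : ℝ, 0 < c' ∧ 0 < δ ∧ 0 < t₀ ∧
      ∀ t : ℝ, t₀ ≤ t → ∀ i : ZMod K, ∀ r : ℝ, 0 < r → r ≤ 1 →
        |(-(1 / 4)) * (deriv (deriv (cutoffRescale χ u t i)) r +
              deriv (cutoffRescale χ u t i) r / r) +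
            t ^ 2 * r ^ ((2 : ℝ) / K) *
              (Real.exp (cutoffRescale χ u t i r - cutoffRescale χ u t (i + 1) r) -
                Real.exp (cutoffRescale χ u t (i - 1) r - cutoffRescale χ u t i r))| ≤
          c' * Real.exp (-δ * t) := by
  have hK0 : 0 < K := by omega
  have hu : ∀ i r, 0 < r → todaResidual K u 1 i r = 0 := fun i r hr => by
    rw [todaResidual, radialLaplacian, one_mul, ← hODE i r hr]; ring
  obtain ⟨M, hM, hχM⟩ := hχ.exists_abs_le_of_isCompact (isCompact_Icc (a := 1 / 2) (b := 1))
  refine ⟨M * C * (2 + 4 * exp (2 * (M * C))) * (16 / c) ^ 2, c / 8, 1, by positivity,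
    by positivity, one_pos, fun t ht i r hr0 hr1 => ?_⟩
  change |todaResidual K (cutoffRescale χ u t) (t ^ 2) i r| ≤ _
  rcases lt_or_ge r (1 / 2) with hr | hr
  · rw [todaResidual_cutoffRescale_eq_zero hK0 hu hχ1 (by linarith) hr0 hr, abs_zero]
    positivity
  set E := exp (-(c / 4 * t))
  have hE : E ≤ 1 := exp_le_one_iff.2 (by nlinarith)
  have hdecay' (j : ZMod K) : |u j (t ^ ((K : ℝ) / (K + 1)) * r)| +
      |deriv (u j) (t ^ ((K : ℝ) / (K + 1)) * r)| +
      |deriv (deriv (u j)) (t ^ ((K : ℝ) / (K + 1)) * r)| ≤ C * E := by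
    refine (hdecay j _ ?_).trans ?_
    · nlinarith [one_le_rpow ht (by positivity : (0 : ℝ) ≤ K / (K + 1))]
    · have := div_four_le_rpow_div_add_one_mul_rpow_add_one_div
        (by exact_mod_cast hK0 : (1 : ℝ) ≤ K) (by linarith : (0 : ℝ) ≤ t) hr hr1
      exact mul_le_mul_of_nonneg_left (exp_le_exp.2 (by nlinarith)) hC.le
  obtain ⟨hχr0, hχr1, hχr2⟩ := hχM r ⟨hr, hr1⟩
  calc _ ≤ t ^ 2 * (M * (C * E)) * (2 + 4 * exp (2 * (M * (C * E)))) :=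
        abs_todaResidual_cutoffRescale_le hreg hχ ht hr hr1 hχr0 hχr1 hχr2 hdecay' i
    _ = M * C * (2 + 4 * exp (2 * (M * (C * E)))) * (t ^ 2 * E) := by ring
    _ ≤ M * C * (2 + 4 * exp (2 * (M * C))) * ((4 / (c / 4)) ^ 2 * exp (-(c / 4 / 2 * t))) := by
      gcongr ?_ * ?_
      · gcongr; exact mul_le_of_le_one_right hC.le hE
      · exact sq_mul_exp_neg_le (by positivity) (by linarith : (0 : ℝ) ≤ t)
    _ = M * C * (2 + 4 * exp (2 * (M * C))) * (16 / c) ^ 2 * exp (-(c / 8) * t) := by ring_nf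

/-- Gluing cutoff rank-`K` Toda model solutions produces an approximate solution with
error of size `O(e^{-δ t})` on the unit disk: the `(i,i)`-entry of
`F(∂̄_E, tφ, h_t^{app})` on a `K×K` block is exponentially small in `t`. -/
theorem stmt_1
    (K : ℕ) (hK : 2 ≤ K)
    (u : ZMod K → ℝ → ℝ)
    (hreg : ∀ i, ContDiffOn ℝ 2 (u i) (Set.Ioi 0))
    (hODE : ∀ i, ∀ r : ℝ, 0 < r →
      (1 / 4) * (deriv (deriv (u i)) r + deriv (u i) r / r) =
        r ^ ((2 : ℝ) / K) *
          (Real.exp (u i r - u (i + 1) r) - Real.exp (u (i - 1) r - u i r)))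
    (C c : ℝ) (hC : 0 < C) (hc : 0 < c)
    (hdecay : ∀ i, ∀ r : ℝ, 1 / 4 ≤ r →
      |u i r| + |deriv (u i) r| + |deriv (deriv (u i)) r| ≤
        C * Real.exp (-c * r ^ (((K : ℝ) + 1) / K)))
    (χ : ℝ → ℝ) (hχ : ContDiff ℝ 2 χ)
    (hχ01 : ∀ r : ℝ, χ r ∈ Set.Icc (0 : ℝ) 1)
    (hχ1 : ∀ r : ℝ, r ≤ 1 / 2 → χ r = 1)
    (hχ0 : ∀ r : ℝ, 1 ≤ r → χ r = 0) :
    ∃ c' δ t₀ : ℝ, 0 < c' ∧ 0 < δ ∧ 0 < t₀ ∧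
      ∀ t : ℝ, t₀ ≤ t → ∀ i : ZMod K, ∀ r : ℝ, 0 < r → r ≤ 1 →
        |(-(1 / 4)) * (deriv (deriv (cutoffRescale χ u t i)) r +
              deriv (cutoffRescale χ u t i) r / r) +
            t ^ 2 * r ^ ((2 : ℝ) / K) *
              (Real.exp (cutoffRescale χ u t i r - cutoffRescale χ u t (i + 1) r) -
                Real.exp (cutoffRescale χ u t (i - 1) r - cutoffRescale χ u t i r))| ≤
          c' * Real.exp (-δ * t) :=
  stmt_1_general K hK u hreg hODE C c hC hc hdecay χ hχ hχ1
end

section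
/- Let ν ∈ ℝ, ℓ ∈ ℤ, b ∈ ℝ, and a, a' ∈ ℂ. Define ψ : (0,∞) × ℝ → ℂ by ψ(r,θ) = r^ν·(a·e^{iℓθ} + a'·e^{−iℓθ}). Then for all r > 0 and θ ∈ ℝ, r∂_r(r∂_rψ) + ∂_θ²ψ + 4ib·∂_θψ − 4b²·ψ = r^ν·( a·e^{iℓθ}·(ν² − (ℓ + 2b)²) + a'·e^{−iℓθ}·(ν² − (ℓ − 2b)²) ). Moreover, if ℓ ≠ 0, then this expression vanishes for all (r,θ) if and only if (a = 0 or ν² = (ℓ + 2b)²) and (a' = 0 or ν² = (ℓ − 2b)²). -/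
/-- `ψ(r,θ) = r^ν (a e^{iℓθ} + a' e^{-iℓθ})` with `ν` real. -/
noncomputable def psiPair (ν : ℝ) (ℓ : ℤ) (a a' : ℂ) : ℝ → ℝ → ℂ :=
  fun r θ => ((r ^ ν : ℝ) : ℂ) *
    (a * Complex.exp (Complex.I * ℓ * θ) + a' * Complex.exp (-(Complex.I * ℓ * θ)))

/-!
Both variables separate. In `r`, the function `r ^ ν` is an eigenfunction of the Euler operator
`r∂_r` with eigenvalue `ν`. In `θ`, differentiation maps `ψ` to `iℓ` times the same function with
`a'` replaced by `-a'`, so `∂_θ² ψ = -ℓ² ψ`. Hence the model operator multiplies the two Fourier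
modes by `ν² - (ℓ + 2b)²` and `ν² - (ℓ - 2b)²`, and for `ℓ ≠ 0` it kills `ψ` iff each mode
is killed, because `e^{iℓθ}` and `e^{-iℓθ}` are linearly independent (evaluate at `θ = 0` and
at `θ = π / (2ℓ)`).
-/

open Complex

theorem hasDerivAt_cexp_const_mul_ofReal (c : ℂ) (θ : ℝ) :
    HasDerivAt (fun φ : ℝ => exp (c * φ)) (c * exp (c * θ)) θ := by
  have h := ((hasDerivAt_id (θ : ℂ)).const_mul c).cexp
  simp only [mul_one, id] at h
  simpa only [mul_comm] using h.comp_ofReal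

theorem euler_ofReal_rpow_mul {r : ℝ} (hr : 0 < r) (ν : ℝ) (g : ℂ) :
    (r : ℂ) * deriv (fun s : ℝ => ((s ^ ν : ℝ) : ℂ) * g) r = ν * (((r ^ ν : ℝ) : ℂ) * g) := by
  have h := ((Real.hasDerivAt_rpow_const (p := ν) (Or.inl hr.ne')).ofReal_comp).mul_const g
  rw [h.deriv, Real.rpow_sub_one hr.ne']
  have hr' : (r : ℂ) ≠ 0 := ofReal_ne_zero.2 hr.ne'
  push_cast
  field_simp

theorem deriv_psiPair_angle (ν : ℝ) (ℓ : ℤ) (a a' : ℂ) (r : ℝ) :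
    deriv (psiPair ν ℓ a a' r) = fun θ => I * ℓ * psiPair ν ℓ a (-a') r θ := by
  funext θ
  have h₁ := (hasDerivAt_cexp_const_mul_ofReal (I * ℓ) θ).const_mul a
  have h₂ := (hasDerivAt_cexp_const_mul_ofReal (-(I * ℓ)) θ).const_mul a'
  simp only [neg_mul] at h₂
  refine ((h₁.add h₂).const_mul ((r ^ ν : ℝ) : ℂ)).deriv.trans ?_
  simp only [psiPair]
  ring

theorem deriv_deriv_psiPair_angle (ν : ℝ) (ℓ : ℤ) (a a' : ℂ) (r : ℝ) :
    deriv (deriv (psiPair ν ℓ a a' r)) = fun θ => -(ℓ : ℂ) ^ 2 * psiPair ν ℓ a a' r θ := by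
  funext θ
  rw [deriv_psiPair_angle, deriv_const_mul_field', deriv_psiPair_angle, neg_neg]
  linear_combination (ℓ : ℂ) ^ 2 * psiPair ν ℓ a a' r θ * I_sq

theorem euler_psiPair_radius {r : ℝ} (hr : 0 < r) (ν : ℝ) (ℓ : ℤ) (a a' : ℂ) (θ : ℝ) :
    (r : ℂ) * deriv (fun s : ℝ => psiPair ν ℓ a a' s θ) r = ν * psiPair ν ℓ a a' r θ :=
  euler_ofReal_rpow_mul hr ν _

theorem euler_euler_psiPair_radius {r : ℝ} (hr : 0 < r) (ν : ℝ) (ℓ : ℤ) (a a' : ℂ) (θ : ℝ) :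
    (r : ℂ) * deriv (fun s : ℝ => (s : ℂ) * deriv (fun s' : ℝ => psiPair ν ℓ a a' s' θ) s) r =
      ν ^ 2 * psiPair ν ℓ a a' r θ := by
  have h : (fun s : ℝ => (s : ℂ) * deriv (fun s' : ℝ => psiPair ν ℓ a a' s' θ) s)
      =ᶠ[nhds r] fun s => ν * psiPair ν ℓ a a' s θ := by
    filter_upwards [eventually_gt_nhds hr] with s hs using euler_psiPair_radius hs ν ℓ a a' θ
  rw [h.deriv_eq, deriv_const_mul_field', mul_left_comm, euler_psiPair_radius hr]
  ring

theorem modelOperator_psiPair (ν : ℝ) (ℓ : ℤ) (b : ℝ) (a a' : ℂ) {r : ℝ} (hr : 0 < r) (θ : ℝ) :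
    (r : ℂ) * deriv (fun s : ℝ => (s : ℂ) *
          deriv (fun s' : ℝ => psiPair ν ℓ a a' s' θ) s) r +
        deriv (deriv (fun φ : ℝ => psiPair ν ℓ a a' r φ)) θ +
        4 * I * (b : ℂ) * deriv (fun φ : ℝ => psiPair ν ℓ a a' r φ) θ -
        4 * (b : ℂ) ^ 2 * psiPair ν ℓ a a' r θ =
      ((r ^ ν : ℝ) : ℂ) *
        (a * exp (I * ℓ * θ) * ((ν : ℂ) ^ 2 - ((ℓ : ℂ) + 2 * (b : ℂ)) ^ 2) +
          a' * exp (-(I * ℓ * θ)) * ((ν : ℂ) ^ 2 - ((ℓ : ℂ) - 2 * (b : ℂ)) ^ 2)) := by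
  rw [euler_euler_psiPair_radius hr, deriv_deriv_psiPair_angle, deriv_psiPair_angle]
  simp only [psiPair]
  linear_combination 4 * b * ℓ * ((r ^ ν : ℝ) : ℂ) *
    (a * exp (I * ℓ * θ) - a' * exp (-(I * ℓ * θ))) * I_sq

theorem forall_mul_cexp_add_mul_cexp_neg_eq_zero_iff {t : ℝ} (ht : t ≠ 0) (x y : ℂ) :
    (∀ θ : ℝ, x * exp (I * t * θ) + y * exp (-(I * t * θ)) = 0) ↔ x = 0 ∧ y = 0 := by
  refine ⟨fun h => ?_, by rintro ⟨rfl, rfl⟩ θ; simp⟩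
  have h_zero : x + y = 0 := by simpa using h 0
  have h_quarter : I * t * ((Real.pi / (2 * t) : ℝ) : ℂ) = Real.pi / 2 * I := by
    have ht' : (t : ℂ) ≠ 0 := ofReal_ne_zero.2 ht
    push_cast
    field_simp
  have h_diff : x - y = 0 := by
    have := h (Real.pi / (2 * t))
    rw [h_quarter, exp_neg, exp_pi_div_two_mul_I, inv_I] at this
    simpa [I_ne_zero] using (show I * (x - y) = 0 by linear_combination this)
  exact ⟨by linear_combination (h_zero + h_diff) / 2, by linear_combination (h_zero - h_diff) / 2⟩

/-- Indicial-root computation for the coupled pair of off-diagonal blocks: the model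
operator `(r∂_r)² + (∂_θ + 2ib)²` applied to `ψ(r,θ) = r^ν(a e^{iℓθ} + a' e^{-iℓθ})` gives
`r^ν (a e^{iℓθ}(ν² - (ℓ+2b)²) + a' e^{-iℓθ}(ν² - (ℓ-2b)²))`; for `ℓ ≠ 0` this vanishes
identically iff `(a = 0 ∨ ν² = (ℓ+2b)²)` and `(a' = 0 ∨ ν² = (ℓ-2b)²)`. -/
theorem stmt_6 (ν : ℝ) (ℓ : ℤ) (b : ℝ) (a a' : ℂ) :
    (∀ r : ℝ, 0 < r → ∀ θ : ℝ,
      (r : ℂ) * deriv (fun s : ℝ => (s : ℂ) *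
            deriv (fun s' : ℝ => psiPair ν ℓ a a' s' θ) s) r +
          deriv (deriv (fun φ : ℝ => psiPair ν ℓ a a' r φ)) θ +
          4 * Complex.I * (b : ℂ) * deriv (fun φ : ℝ => psiPair ν ℓ a a' r φ) θ -
          4 * (b : ℂ) ^ 2 * psiPair ν ℓ a a' r θ =
        ((r ^ ν : ℝ) : ℂ) *
          (a * Complex.exp (Complex.I * ℓ * θ) *
              (((ν : ℂ)) ^ 2 - ((ℓ : ℂ) + 2 * (b : ℂ)) ^ 2) +
            a' * Complex.exp (-(Complex.I * ℓ * θ)) *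
              (((ν : ℂ)) ^ 2 - ((ℓ : ℂ) - 2 * (b : ℂ)) ^ 2))) ∧
    (ℓ ≠ 0 →
      ((∀ r : ℝ, 0 < r → ∀ θ : ℝ,
        (r : ℂ) * deriv (fun s : ℝ => (s : ℂ) *
              deriv (fun s' : ℝ => psiPair ν ℓ a a' s' θ) s) r +
            deriv (deriv (fun φ : ℝ => psiPair ν ℓ a a' r φ)) θ +
            4 * Complex.I * (b : ℂ) * deriv (fun φ : ℝ => psiPair ν ℓ a a' r φ) θ -
            4 * (b : ℂ) ^ 2 * psiPair ν ℓ a a' r θ = 0) ↔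
        ((a = 0 ∨ ν ^ 2 = ((ℓ : ℝ) + 2 * b) ^ 2) ∧
          (a' = 0 ∨ ν ^ 2 = ((ℓ : ℝ) - 2 * b) ^ 2)))) := by
  refine ⟨fun r hr θ => modelOperator_psiPair ν ℓ b a a' hr θ, fun hℓ => ?_⟩
  have hℓ' : (ℓ : ℝ) ≠ 0 := mod_cast hℓ
  have h_modes := forall_mul_cexp_add_mul_cexp_neg_eq_zero_iff hℓ'
  simp only [ofReal_intCast] at h_modes
  -- the factor `r ^ ν` is nonzero, so `r` drops out and only the angular condition remains
  simp +contextual only [modelOperator_psiPair, mul_eq_zero, ofReal_eq_zero,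
    (Real.rpow_pos_of_pos _ _).ne', false_or]
  simp only [← exists_imp, exists_gt, true_imp_iff, mul_right_comm _ (exp _), h_modes,
    mul_eq_zero, sub_eq_zero]
  norm_cast
end

section
/- Let K ≥ 1 be an integer, w ∈ ℂ∖{0}, ζ = e^{2πi/K}, and for 1 ≤ k ≤ K set λ_k = ζ^{k−1}·w and s_k = (λ_k^0, λ_k^1, …, λ_k^{K−1}) ∈ ℂ^K. Then (1/K)·Σ_{k=1}^K s_k = e_1, and for each 2 ≤ i ≤ K, (1/(K·w^K))·Σ_{k=1}^K λ_k^{K−i+1}·s_k = e_i, where e_1, …, e_K denotes the standard basis of ℂ^K. In particular all of these vectors are independent of w. -/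
/-!
The `j`-th coordinate of `∑ k, λ_k ^ a • s_k` is the power sum `∑ k, λ_k ^ (a + j)
= w ^ (a + j) ∑ k, ζ ^ (k (a + j))`, which by orthogonality of the `K`-th roots of unity equals
`K w ^ (a + j)` when `K ∣ a + j` and vanishes otherwise. Since `j < K`, for `a = 0` this singles
out `j = 0`, and for `a = K - i` with `0 < i < K` it singles out `j = i`.
-/

open Finset

theorem IsPrimitiveRoot.sum_pow_pow_eq_ite {R : Type*} [CommRing R] [IsDomain R] {ζ : R}
    {K : ℕ} (hζ : IsPrimitiveRoot ζ K) (m : ℕ) :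
    ∑ k ∈ range K, (ζ ^ k) ^ m = if K ∣ m then (K : R) else 0 := by
  simp_rw [← pow_mul, mul_comm _ m, pow_mul]
  split_ifs with hm
  · simp [(hζ.pow_eq_one_iff_dvd m).mpr hm]
  · have hne : ζ ^ m ≠ 1 := fun h => hm ((hζ.pow_eq_one_iff_dvd m).mp h)
    have hpowK : (ζ ^ m) ^ K = 1 := by rw [← pow_mul, mul_comm, pow_mul, hζ.pow_eq_one, one_pow]
    refine eq_zero_of_ne_zero_of_mul_left_eq_zero (sub_ne_zero_of_ne hne.symm) ?_
    rw [mul_neg_geom_sum, hpowK, sub_self]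

theorem IsPrimitiveRoot.sum_fin_mul_pow_eq_ite {R : Type*} [CommRing R] [IsDomain R] {ζ : R}
    {K : ℕ} (hζ : IsPrimitiveRoot ζ K) (w : R) (m : ℕ) :
    ∑ k : Fin K, (ζ ^ (k : ℕ) * w) ^ m = if K ∣ m then (K : R) * w ^ m else 0 := by
  simp_rw [mul_pow, ← Finset.sum_mul, Fin.sum_univ_eq_sum_range (fun k => (ζ ^ k) ^ m),
    hζ.sum_pow_pow_eq_ite, ite_mul, zero_mul]

theorem Nat.dvd_sub_add_iff_eq {K i j : ℕ} (hi₀ : 0 < i) (hiK : i < K) (hjK : j < K) :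
    K ∣ K - i + j ↔ j = i := by
  refine ⟨fun h => ?_, fun h => by rw [h, Nat.sub_add_cancel hiK.le]⟩
  have := Nat.eq_of_dvd_of_lt_two_mul (a := K - i + j) (by omega) h (by omega)
  omega

/-- Computational core of Proposition 2.5: with `ζ = e^{2πi/K}`, `λ_k = ζ^k w` and
`s_k = (λ_k^0, …, λ_k^{K-1}) ∈ ℂ^K` (indices `k ∈ Fin K`, i.e. `k = 0, …, K-1`),
one has `(1/K) Σ_k s_k = e_0`, and for each `i ≠ 0`,
`(1/(K w^K)) Σ_k λ_k^{K-i} s_k = e_i`, where `e_i = Pi.single i 1` is the standard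
basis of `ℂ^K`. (In the 1-indexed notation of the paper these are the sections
`s'_1, …, s'_K`.) In particular, all of these vectors are independent of `w`. -/
theorem stmt_13
    (K : ℕ) (hK : 1 ≤ K) (w : ℂ) (hw : w ≠ 0) :
    let ζ : ℂ := Complex.exp (2 * Real.pi * Complex.I / K)
    let lam : Fin K → ℂ := fun k => ζ ^ (k : ℕ) * w
    let s : Fin K → Fin K → ℂ := fun k j => lam k ^ (j : ℕ)
    ((1 / (K : ℂ)) • ∑ k : Fin K, s k = Pi.single (⟨0, hK⟩ : Fin K) 1) ∧
    (∀ i : Fin K, i ≠ (⟨0, hK⟩ : Fin K) →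
      (1 / ((K : ℂ) * w ^ K)) • ∑ k : Fin K, lam k ^ (K - (i : ℕ)) • s k =
        Pi.single i 1) := by
  intro ζ lam s
  have hζ : IsPrimitiveRoot ζ K := Complex.isPrimitiveRoot_exp K (by omega)
  have hK0 : (K : ℂ) ≠ 0 := Nat.cast_ne_zero.mpr (by omega)
  refine ⟨funext fun j => ?_, fun i hi => funext fun j => ?_⟩
  · have hdvd : K ∣ (j : ℕ) ↔ j = ⟨0, hK⟩ := by
      rw [Fin.ext_iff]
      exact ⟨fun h => Nat.eq_zero_of_dvd_of_lt h j.isLt, fun h => h ▸ dvd_zero K⟩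
    simp only [Pi.smul_apply, Finset.sum_apply, s, lam, hζ.sum_fin_mul_pow_eq_ite, hdvd,
      smul_eq_mul, Pi.single_apply]
    split_ifs with h
    · subst h; simp [hK0]
    · simp
  · have hdvd : K ∣ K - (i : ℕ) + j ↔ j = i := by
      rw [Fin.ext_iff]
      exact Nat.dvd_sub_add_iff_eq (Nat.pos_of_ne_zero fun h => hi (Fin.ext h)) i.isLt j.isLt
    simp only [Pi.smul_apply, Finset.sum_apply, smul_eq_mul, s, ← pow_add, lam,
      hζ.sum_fin_mul_pow_eq_ite, hdvd, Pi.single_apply]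
    split_ifs with h
    · subst h
      rw [Nat.sub_add_cancel j.isLt.le]
      field_simp
    · simp
end
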